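/- Among 3×3 real matrices A with ‖A‖² = 3 and det A = 0, the wedge norm satisfies ‖A∧A‖² ≤ 9/4, with equality if and only if A is √(3/2) times a matrix that is orthogonal on a 2-plane and zero on its orthogonal complement (i.e., A has singular values √(3/2), √(3/2), 0). -/

import Mathlib

/-!
Diagonalise `Aᵀ * A = U * diagonal μ * Uᵀ` with `U` orthogonal. Then `‖A‖² = μ₀ + μ₁ + μ₂`,
`‖A∧A‖² = μ₀μ₁ + μ₀μ₂ + μ₁μ₂` (via `‖A∧A‖² = ((tr AᵀA)² - tr (AᵀA)²) / 2`) and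
`(det A)² = μ₀μ₁μ₂`. So some `μᵢ` vanishes and the other two sum to `3`, and AM-GM gives
`‖A∧A‖² ≤ 9/4`, with equality iff `μ` is a permutation of `(3/2, 3/2, 0)`. In that case the
columns of `A * V` (`V` the correspondingly reordered `U`) are orthogonal with squared lengths
`3/2, 3/2, 0`; normalising the first two and adding their cross product gives the orthogonal `W`.
-/

open Matrix

/-- The squared Frobenius norm of a 3×3 matrix. -/
def frobSq (A : Matrix (Fin 3) (Fin 3) ℝ) : ℝ := ∑ i, ∑ j, (A i j) ^ 2

/-- The squared wedge norm ‖A∧A‖²: the sum of the squares of all 2×2 minors of A. -/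
def wedgeNormSq (A : Matrix (Fin 3) (Fin 3) ℝ) : ℝ :=
  ∑ r, ∑ s, ((A.submatrix (Fin.succAbove r) (Fin.succAbove s)).det) ^ 2

theorem exists_orthogonal_transpose_mul_self_eq_diagonal {n : Type*} [Fintype n] [DecidableEq n]
    (A : Matrix n n ℝ) :
    ∃ (U : Matrix n n ℝ) (μ : n → ℝ), Uᵀ * U = 1 ∧
      Aᵀ * A = U * diagonal μ * Uᵀ := by
  have hA : (Aᵀ * A).IsHermitian := by simpa using isHermitian_conjTranspose_mul_self A
  refine ⟨hA.eigenvectorUnitary, hA.eigenvalues, ?_, ?_⟩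
  · simpa [star, conjTranspose] using mem_unitaryGroup_iff'.mp hA.eigenvectorUnitary.2
  · simpa [star, Function.comp_def] using hA.spectral_theorem

section Orthogonal

variable {n R : Type*} [Fintype n] [DecidableEq n] [CommRing R]

theorem trace_conj_of_orthogonal {U : Matrix n n R} (hU : Uᵀ * U = 1) (M : Matrix n n R) :
    trace (U * M * Uᵀ) = trace M := by
  rw [trace_mul_cycle, hU, Matrix.one_mul]

theorem det_conj_of_orthogonal {U : Matrix n n R} (hU : Uᵀ * U = 1) (M : Matrix n n R) :
    det (U * M * Uᵀ) = det M := by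
  rw [det_mul, det_mul, mul_comm, ← mul_assoc, ← det_mul, hU, det_one, one_mul]

theorem conj_diagonal_mul_self {U : Matrix n n R} (hU : Uᵀ * U = 1) (μ : n → R) :
    U * diagonal μ * Uᵀ * (U * diagonal μ * Uᵀ) = U * diagonal (μ * μ) * Uᵀ := by
  calc U * diagonal μ * Uᵀ * (U * diagonal μ * Uᵀ)
      = U * (diagonal μ * (Uᵀ * U) * diagonal μ) * Uᵀ := by noncomm_ring
    _ = U * diagonal (μ * μ) * Uᵀ := by
      rw [hU, Matrix.mul_one, diagonal_mul_diagonal]; rfl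

theorem transpose_mul_self_of_eq_mul_diagonal_mul {A W V : Matrix n n R} {d : n → R}
    (hW : Wᵀ * W = 1) (hA : A = W * diagonal d * Vᵀ) :
    Aᵀ * A = V * diagonal (d * d) * Vᵀ := by
  subst hA
  calc (W * diagonal d * Vᵀ)ᵀ * (W * diagonal d * Vᵀ)
      = V * (diagonal d * (Wᵀ * W) * diagonal d) * Vᵀ := by
        simp only [transpose_mul, transpose_transpose, diagonal_transpose]; noncomm_ring
    _ = V * diagonal (d * d) * Vᵀ := by
      rw [hW, Matrix.mul_one, diagonal_mul_diagonal]; rfl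

theorem conj_diagonal_reindex (U : Matrix n n R) (μ : n → R) (σ : Equiv.Perm n) :
    U * diagonal μ * Uᵀ = U.submatrix id σ * diagonal (μ ∘ σ) * (U.submatrix id σ)ᵀ := by
  rw [← submatrix_diagonal_equiv, transpose_submatrix, submatrix_mul_equiv,
    submatrix_mul_equiv, submatrix_id_id]

theorem transpose_mul_self_submatrix_of_orthogonal {U : Matrix n n R} (hU : Uᵀ * U = 1)
    (σ : Equiv.Perm n) :
    (U.submatrix id σ)ᵀ * U.submatrix id σ = 1 := by
  rw [transpose_submatrix, ← submatrix_mul _ _ _ _ _ Function.bijective_id, hU,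
    submatrix_one_equiv]

end Orthogonal

section

theorem frobSq_eq_trace (A : Matrix (Fin 3) (Fin 3) ℝ) : frobSq A = trace (Aᵀ * A) := by
  simp only [frobSq, trace, diag_apply, mul_apply, transpose_apply, Fin.sum_univ_three]
  ring

theorem wedgeNormSq_eq_trace (A : Matrix (Fin 3) (Fin 3) ℝ) :
    wedgeNormSq A = (trace (Aᵀ * A) ^ 2 - trace (Aᵀ * A * (Aᵀ * A))) / 2 := by
  simp only [wedgeNormSq, Nat.reduceAdd, trace, diag_apply, mul_apply, transpose_apply,
    Fin.sum_univ_three, det_fin_two, submatrix_apply, Fin.succAbove, Fin.castSucc_zero,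
    Fin.castSucc_one, Fin.succ_zero_eq_one, Fin.succ_one_eq_two, Fin.reduceLT, lt_self_iff_false,
    not_lt_zero, zero_lt_one, ↓reduceIte]
  ring

variable {A U : Matrix (Fin 3) (Fin 3) ℝ} {μ : Fin 3 → ℝ}

theorem frobSq_eq_sum (hU : Uᵀ * U = 1) (hA : Aᵀ * A = U * diagonal μ * Uᵀ) :
    frobSq A = μ 0 + μ 1 + μ 2 := by
  rw [frobSq_eq_trace, hA, trace_conj_of_orthogonal hU, trace_diagonal, Fin.sum_univ_three]

theorem wedgeNormSq_eq_sum_mul (hU : Uᵀ * U = 1) (hA : Aᵀ * A = U * diagonal μ * Uᵀ) :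
    wedgeNormSq A = μ 0 * μ 1 + μ 0 * μ 2 + μ 1 * μ 2 := by
  rw [wedgeNormSq_eq_trace, hA, conj_diagonal_mul_self hU, trace_conj_of_orthogonal hU,
    trace_conj_of_orthogonal hU, trace_diagonal, trace_diagonal]
  simp only [Fin.sum_univ_three, Pi.mul_apply]
  ring

theorem det_sq_eq_prod (hU : Uᵀ * U = 1) (hA : Aᵀ * A = U * diagonal μ * Uᵀ) :
    A.det ^ 2 = μ 0 * μ 1 * μ 2 := by
  calc A.det ^ 2 = (Aᵀ * A).det := by rw [det_mul, det_transpose, sq]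
    _ = μ 0 * μ 1 * μ 2 := by
      rw [hA, det_conj_of_orthogonal hU, det_diagonal, Fin.prod_univ_three]

end

theorem sum_mul_le_of_prod_eq_zero {μ : Fin 3 → ℝ} {t : ℝ} (hsum : μ 0 + μ 1 + μ 2 = t)
    (hprod : μ 0 * μ 1 * μ 2 = 0) : μ 0 * μ 1 + μ 0 * μ 2 + μ 1 * μ 2 ≤ t ^ 2 / 4 := by
  subst hsum
  rcases mul_eq_zero.1 hprod with h | h
  · rcases mul_eq_zero.1 h with h | h
    · rw [h]; nlinarith [sq_nonneg (μ 1 - μ 2)]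
    · rw [h]; nlinarith [sq_nonneg (μ 0 - μ 2)]
  · rw [h]; nlinarith [sq_nonneg (μ 0 - μ 1)]

theorem exists_perm_of_sum_mul_eq {μ : Fin 3 → ℝ} {t : ℝ} (hsum : μ 0 + μ 1 + μ 2 = t)
    (hprod : μ 0 * μ 1 * μ 2 = 0) (heq : μ 0 * μ 1 + μ 0 * μ 2 + μ 1 * μ 2 = t ^ 2 / 4) :
    ∃ σ : Equiv.Perm (Fin 3), μ ∘ σ = ![t / 2, t / 2, 0] := by
  subst hsum
  rcases mul_eq_zero.1 hprod with h | h
  · rcases mul_eq_zero.1 h with h | h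
    · have h1 : μ 1 = μ 2 := by rw [h] at heq; nlinarith [sq_nonneg (μ 1 - μ 2)]
      refine ⟨Equiv.swap 0 2, funext fun i => ?_⟩
      fin_cases i <;> simp [Equiv.swap_apply_of_ne_of_ne, h, h1]
    · have h0 : μ 0 = μ 2 := by rw [h] at heq; nlinarith [sq_nonneg (μ 0 - μ 2)]
      refine ⟨Equiv.swap 1 2, funext fun i => ?_⟩
      fin_cases i <;> simp [Equiv.swap_apply_of_ne_of_ne, h, h0]
  · have h0 : μ 0 = μ 1 := by rw [h] at heq; nlinarith [sq_nonneg (μ 0 - μ 1)]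
    refine ⟨1, funext fun i => ?_⟩
    fin_cases i <;> simp [h, h0]

theorem mul_transpose_self_of_orthonormal {R : Type*} [CommRing R] {u v : Fin 3 → R}
    (hu : u ⬝ᵥ u = 1) (hv : v ⬝ᵥ v = 1) (huv : u ⬝ᵥ v = 0) :
    of ![u, v, u ⨯₃ v] * (of ![u, v, u ⨯₃ v])ᵀ = 1 := by
  have hvu : v ⬝ᵥ u = 0 := by rwa [dotProduct_comm]
  have hcc : (u ⨯₃ v) ⬝ᵥ (u ⨯₃ v) = 1 := by rw [cross_dot_cross, hu, hv, huv, hvu]; ring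
  have hcu : (u ⨯₃ v) ⬝ᵥ u = 0 := by rw [dotProduct_comm, dot_self_cross]
  have hcv : (u ⨯₃ v) ⬝ᵥ v = 0 := by rw [dotProduct_comm, dot_cross_self]
  ext i j
  change ![u, v, u ⨯₃ v] i ⬝ᵥ ![u, v, u ⨯₃ v] j = _
  fin_cases i <;> fin_cases j <;>
    simp [hu, hv, huv, hvu, hcc, hcu, hcv, dot_self_cross, dot_cross_self]

theorem exists_orthogonal_of_transpose_mul_self_eq_diagonal {C : Matrix (Fin 3) (Fin 3) ℝ}
    {s : ℝ} (hs : s ≠ 0) (hC : Cᵀ * C = diagonal ![s ^ 2, s ^ 2, 0]) :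
    ∃ W : Matrix (Fin 3) (Fin 3) ℝ, Wᵀ * W = 1 ∧ C = W * diagonal ![s, s, 0] := by
  have hcol : ∀ j k, Cᵀ j ⬝ᵥ Cᵀ k = diagonal ![s ^ 2, s ^ 2, 0] j k := fun j k => by
    rw [← hC]; rfl
  have hc2 : Cᵀ 2 = 0 := dotProduct_self_eq_zero.1 (by simpa using hcol 2 2)
  set u := s⁻¹ • Cᵀ 0
  set v := s⁻¹ • Cᵀ 1
  have hu : u ⬝ᵥ u = 1 := by
    simp only [u, dotProduct_smul, smul_dotProduct, hcol, diagonal_apply_eq, cons_val_zero,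
      smul_eq_mul]
    field_simp
  have hv : v ⬝ᵥ v = 1 := by
    simp only [v, dotProduct_smul, smul_dotProduct, hcol, diagonal_apply_eq, cons_val_one,
      cons_val_zero, smul_eq_mul]
    field_simp
  have huv : u ⬝ᵥ v = 0 := by simp [u, v, hcol]
  refine ⟨(of ![u, v, u ⨯₃ v])ᵀ, ?_, ?_⟩
  · rw [transpose_transpose]
    exact mul_transpose_self_of_orthonormal hu hv huv
  · ext i j
    rw [mul_diagonal]
    fin_cases j
    · change C i 0 = s⁻¹ * C i 0 * s
      field_simp
    · change C i 1 = s⁻¹ * C i 1 * s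
      field_simp
    · simpa using congrFun hc2 i

theorem exists_orthogonal_eq_mul_diagonal_mul {A V : Matrix (Fin 3) (Fin 3) ℝ} {s : ℝ}
    (hs : s ≠ 0) (hV : Vᵀ * V = 1) (hA : Aᵀ * A = V * diagonal ![s ^ 2, s ^ 2, 0] * Vᵀ) :
    ∃ W : Matrix (Fin 3) (Fin 3) ℝ, Wᵀ * W = 1 ∧ A = W * diagonal ![s, s, 0] * Vᵀ := by
  have hAV : (A * V)ᵀ * (A * V) = diagonal ![s ^ 2, s ^ 2, 0] := by
    calc (A * V)ᵀ * (A * V) = Vᵀ * (Aᵀ * A) * V := by rw [transpose_mul]; noncomm_ring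
      _ = (Vᵀ * V) * diagonal ![s ^ 2, s ^ 2, 0] * (Vᵀ * V) := by rw [hA]; noncomm_ring
      _ = diagonal ![s ^ 2, s ^ 2, 0] := by rw [hV, Matrix.one_mul, Matrix.mul_one]
  obtain ⟨W, hW, hWV⟩ := exists_orthogonal_of_transpose_mul_self_eq_diagonal hs hAV
  refine ⟨W, hW, ?_⟩
  rw [← hWV, Matrix.mul_assoc, mul_eq_one_comm.1 hV, Matrix.mul_one]

/-- Among 3×3 real matrices with ‖A‖² = 3 and det A = 0, the wedge norm satisfies
‖A∧A‖² ≤ 9/4, with equality iff A has singular values √(3/2), √(3/2), 0, i.e.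
A = W · diag(√(3/2), √(3/2), 0) · V⁻¹ for some orthogonal W, V — a matrix which is
√(3/2) times one that is orthogonal on a 2-plane and zero on its orthogonal complement. -/
theorem wedgeNorm_max_on_singular_sphere (A : Matrix (Fin 3) (Fin 3) ℝ)
    (hA : frobSq A = 3) (hdet : A.det = 0) :
    wedgeNormSq A ≤ 9 / 4 ∧
    (wedgeNormSq A = 9 / 4 ↔
      ∃ W V : Matrix (Fin 3) (Fin 3) ℝ, Wᵀ * W = 1 ∧ Vᵀ * V = 1 ∧
        A = W * Matrix.diagonal ![Real.sqrt (3/2), Real.sqrt (3/2), 0] * Vᵀ) := by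
  obtain ⟨U, μ, hU, hAU⟩ := exists_orthogonal_transpose_mul_self_eq_diagonal A
  have hsum : μ 0 + μ 1 + μ 2 = 3 := by rw [← frobSq_eq_sum hU hAU, hA]
  have hprod : μ 0 * μ 1 * μ 2 = 0 := by rw [← det_sq_eq_prod hU hAU, hdet]; ring
  have hbound : (3 : ℝ) ^ 2 / 4 = 9 / 4 := by norm_num
  have hs : Real.sqrt (3 / 2) ^ 2 = 3 / 2 := Real.sq_sqrt (by norm_num)
  refine ⟨?_, ⟨fun heq => ?_, ?_⟩⟩
  · rw [wedgeNormSq_eq_sum_mul hU hAU, ← hbound]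
    exact sum_mul_le_of_prod_eq_zero hsum hprod
  · rw [wedgeNormSq_eq_sum_mul hU hAU, ← hbound] at heq
    obtain ⟨σ, hσ⟩ := exists_perm_of_sum_mul_eq hsum hprod heq
    have hAσ : Aᵀ * A = U.submatrix id σ *
        diagonal ![Real.sqrt (3 / 2) ^ 2, Real.sqrt (3 / 2) ^ 2, 0] * (U.submatrix id σ)ᵀ := by
      rw [hAU, conj_diagonal_reindex U μ σ, hσ, hs]
    obtain ⟨W, hW, hAW⟩ := exists_orthogonal_eq_mul_diagonal_mul (by positivity)
      (transpose_mul_self_submatrix_of_orthogonal hU σ) hAσ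
    exact ⟨W, _, hW, transpose_mul_self_submatrix_of_orthogonal hU σ, hAW⟩
  · rintro ⟨W, V, hW, hV, hAWV⟩
    rw [wedgeNormSq_eq_sum_mul hV (transpose_mul_self_of_eq_mul_diagonal_mul hW hAWV)]
    simp only [Pi.mul_apply, cons_val_zero, cons_val_one, cons_val_two, ← sq, hs]
    norm_num
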